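/- arXiv:1206.0846 — 4 statements merged into one kernel-verified Lean document; each statement's English description precedes it below -/
import Mathlib

section
/- Let N be a finite-dimensional ℚ-vector space, Φ a finite subset of the dual N* closed under negation (the 'roots'), and for each α ∈ Φ an element ρ(α) ∈ N such that ⟨ρ(α), α⟩ = −1, ⟨ρ(α), β⟩ ≥ 0 for all β ∈ Φ with ρ(β) ≠ ρ(α). Suppose α, β ∈ Φ are distinct with ρ(α) = ρ(β), and suppose a collection of vectors D ⊂ N with ρ(α), ρ(−α), ρ(β), ρ(−β) ∈ D spans N (completeness). If ρ(−α) = ρ(−β), then every element of D lies in the hyperplane (α − β)^⊥, contradicting that D spans N. Hence ρ(−α) ≠ ρ(−β). -/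
/-- Let `N` be a finite-dimensional `ℚ`-vector space, `Φ` a finite
subset of the dual closed under negation (the "roots"), and `ρ γ ∈ N` for each
`γ ∈ Φ` with `⟨ρ γ, γ⟩ = −1` and `⟨ρ γ, δ⟩ ≥ 0` on every other vector of the
spanning collection `D` (completeness).  If `α ≠ β` in `Φ` with `ρ α = ρ β` and
`ρ(α), ρ(−α), ρ(β), ρ(−β) ∈ D`, then `ρ(−α) ≠ ρ(−β)` (otherwise all of `D`
would lie in the hyperplane `(α − β)^⊥`, contradicting that `D` spans `N`). -/
theorem stmt_3 {N : Type*} [AddCommGroup N] [Module ℚ N] [FiniteDimensional ℚ N]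
    (Φ : Finset (Module.Dual ℚ N)) (hneg : ∀ γ ∈ Φ, -γ ∈ Φ)
    (ρ : Module.Dual ℚ N → N)
    (h1 : ∀ γ ∈ Φ, γ (ρ γ) = -1)
    (D : Set N) (hspan : Submodule.span ℚ D = ⊤)
    (h2 : ∀ γ ∈ Φ, ∀ d ∈ D, d ≠ ρ γ → 0 ≤ γ d)
    (α β : Module.Dual ℚ N) (hα : α ∈ Φ) (hβ : β ∈ Φ) (hαβ : α ≠ β)
    (hρ : ρ α = ρ β)
    (hmem : ρ α ∈ D ∧ ρ (-α) ∈ D ∧ ρ β ∈ D ∧ ρ (-β) ∈ D) :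
    ρ (-α) ≠ ρ (-β) := by
  intro hρ'
  apply hαβ
  apply LinearMap.ext_on hspan
  intro d hd
  have hnα := hneg α hα
  have hnβ := hneg β hβ
  by_cases h : d = ρ α
  · rw [h, h1 α hα, hρ, h1 β hβ]
  · by_cases h' : d = ρ (-α)
    · have e1 : α d = 1 := by
        have := h1 (-α) hnα
        simp only [LinearMap.neg_apply] at this
        rw [h']; linarith
      have e2 : β d = 1 := by
        have := h1 (-β) hnβ
        simp only [LinearMap.neg_apply] at this
        rw [h', hρ']; linarith
      rw [e1, e2]
    · have p1 := h2 α hα d hd h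
      have p2 := h2 β hβ d hd (by rw [← hρ]; exact h)
      have p3 := h2 (-α) hnα d hd h'
      have p4 := h2 (-β) hnβ d hd (by rw [← hρ']; exact h')
      simp only [LinearMap.neg_apply] at p3 p4
      linarith
end

section
/- Let X be a smooth complete toric variety with torus T, lattice of one-parameter subgroups N, and fan F. Let Φ be the set of Demazure roots α of X (characters α ∈ M with ⟨ρ_{D_α}, α⟩ = −1 for a unique boundary divisor D_α and ⟨ρ_D, α⟩ ≥ 0 for all other T-stable prime divisors D). If α, β ∈ Φ are distinct and D_α = D_β, then γ = α − β and −γ are also Demazure roots, with D_γ = D_{−β} and D_{−γ} = D_{−α}. -/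
/-- A Demazure root of a complete toric variety, abstracted: `D` is the set of
primitive ray generators of the fan, `α` a character with `⟨d, α⟩ = −1` on a
unique ray generator `d = ρ_{X(α)}` and `⟨e, α⟩ ≥ 0` on all other ray
generators `e`. -/
def IsDemazureRoot {N : Type*} [AddCommGroup N] [Module ℚ N]
    (D : Set N) (α : Module.Dual ℚ N) (d : N) : Prop :=
  d ∈ D ∧ α d = -1 ∧ ∀ e ∈ D, e ≠ d → 0 ≤ α e

private lemma demazure_aux {N : Type*} [AddCommGroup N] [Module ℚ N]
    (D : Set N) (hspan : Submodule.span ℚ D = ⊤)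
    (α β : Module.Dual ℚ N) (dα dmα dβ dmβ : N)
    (hα : IsDemazureRoot D α dα) (hmα : IsDemazureRoot D (-α) dmα)
    (hβ : IsDemazureRoot D β dβ) (hmβ : IsDemazureRoot D (-β) dmβ)
    (hne : α ≠ β) (heq : dα = dβ) :
    IsDemazureRoot D (α - β) dmβ := by
  obtain ⟨hdα, hαdα, hαpos⟩ := hα
  obtain ⟨hdmα, hmαdmα, hmαpos⟩ := hmα
  obtain ⟨hdβ, hβdβ, hβpos⟩ := hβ
  obtain ⟨hdmβ, hmβdmβ, hmβpos⟩ := hmβ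
  simp only [LinearMap.neg_apply] at hmαdmα hmβdmβ
  have hαdmα : α dmα = 1 := by linarith
  have hβdmβ : β dmβ = 1 := by linarith
  have hβdα : β dα = -1 := heq ▸ hβdβ
  have hαdβ : α dβ = -1 := heq ▸ hαdα
  have h0α : ∀ e ∈ D, e ≠ dα → e ≠ dmα → α e = 0 := by
    intro e he h1 h2
    have h3 := hmαpos e he h2
    simp only [LinearMap.neg_apply] at h3
    have h4 := hαpos e he h1
    linarith
  have h0β : ∀ e ∈ D, e ≠ dβ → e ≠ dmβ → β e = 0 := by
    intro e he h1 h2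
    have h3 := hmβpos e he h2
    simp only [LinearMap.neg_apply] at h3
    have h4 := hβpos e he h1
    linarith
  have hdαdmα : dα ≠ dmα := by
    intro h; rw [h] at hαdα; rw [hαdα] at hαdmα; norm_num at hαdmα
  have hdβdmβ : dβ ≠ dmβ := by
    intro h; rw [h] at hβdβ; rw [hβdβ] at hβdmβ; norm_num at hβdmβ
  have hdmβdα : dmβ ≠ dα := fun h => hdβdmβ (heq.symm ▸ h.symm)
  have hdmαdmβ : dmα ≠ dmβ := by
    intro h
    apply hne
    apply LinearMap.ext_on hspan
    intro e he
    by_cases h1 : e = dα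
    · rw [h1, hαdα, hβdα]
    · by_cases h2 : e = dmα
      · rw [h2, hαdmα, h, hβdmβ]
      · rw [h0α e he h1 h2, h0β e he (heq ▸ h1) (h ▸ h2)]
  have hαdmβ : α dmβ = 0 := h0α dmβ hdmβ hdmβdα (fun h => hdmαdmβ h.symm)
  refine ⟨hdmβ, ?_, ?_⟩
  · simp [LinearMap.sub_apply, hαdmβ, hβdmβ]
  · intro e he hene
    simp only [LinearMap.sub_apply]
    by_cases h1 : e = dα
    · rw [h1, hαdα, hβdα]; norm_num
    · by_cases h2 : e = dmα
      · rw [h2, hαdmα, h0β dmα hdmα (heq ▸ hdαdmα ∘ Eq.symm) hdmαdmβ]; norm_num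
      · rw [h0β e he (heq ▸ h1) hene]
        have := hαpos e he h1
        linarith

/-- Lemma 8.3: For a smooth complete toric variety (so the ray
generators `D` span `N_ℚ`), if `α ≠ β` are Demazure roots with
`X(α) = X(β)` (i.e. `dα = dβ`), then `γ = α − β` and `−γ` are also Demazure
roots, with `X(γ) = X(−β)` and `X(−γ) = X(−α)`. -/
theorem stmt_4 {N : Type*} [AddCommGroup N] [Module ℚ N] [FiniteDimensional ℚ N]
    (D : Set N) (hspan : Submodule.span ℚ D = ⊤)
    (α β : Module.Dual ℚ N) (dα dmα dβ dmβ : N)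
    (hα : IsDemazureRoot D α dα) (hmα : IsDemazureRoot D (-α) dmα)
    (hβ : IsDemazureRoot D β dβ) (hmβ : IsDemazureRoot D (-β) dmβ)
    (hne : α ≠ β) (heq : dα = dβ) :
    IsDemazureRoot D (α - β) dmβ ∧ IsDemazureRoot D (β - α) dmα :=
  ⟨demazure_aux D hspan α β dα dmα dβ dmβ hα hmα hβ hmβ hne heq,
   demazure_aux D hspan β α dβ dmβ dα dmα hβ hmβ hα hmα hne.symm heq.symm⟩
end

section
/- Let F be a fan of strictly convex polyhedral cones in a finite-dimensional ℚ-vector space N, let σ be a linear functional on N, and let c_E ∈ F be a 1-dimensional cone. Assume σ vanishes on every 1-dimensional cone of F except c_E, on which it is negative. Let F^σ = {c ∩ σ^⊥ | c ∈ F}. Then F^σ is a fan and F is the join of F^σ and c_E, i.e. every cone of F not in F^σ is generated by c_E together with a cone of F^σ. -/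
variable {N : Type*} [AddCommGroup N] [Module ℚ N]

/-- A convex cone (containing the origin), as a set. -/
def IsConvexCone (c : Set N) : Prop :=
  (0 : N) ∈ c ∧ (∀ x ∈ c, ∀ y ∈ c, x + y ∈ c) ∧
    ∀ (t : ℚ), 0 ≤ t → ∀ x ∈ c, t • x ∈ c

/-- Strict convexity: the cone contains no line. -/
def IsStrictlyConvex (c : Set N) : Prop := ∀ x ∈ c, -x ∈ c → x = 0

/-- The convex cone generated by a set. -/
def coneGen (s : Set N) : Set N :=
  {x | ∃ (f : Finset N) (t : N → ℚ), ↑f ⊆ s ∧ (∀ y, 0 ≤ t y) ∧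
    x = ∑ y ∈ f, t y • y}

/-- A polyhedral cone is one generated by finitely many vectors. -/
def IsPolyhedralCone (c : Set N) : Prop := ∃ f : Finset N, c = coneGen (↑f : Set N)

/-- `d` is a face of the convex cone `c`. -/
def IsFaceOf (d c : Set N) : Prop :=
  d ⊆ c ∧ IsConvexCone d ∧ ∀ x ∈ c, ∀ y ∈ c, x + y ∈ d → x ∈ d ∧ y ∈ d

/-- A fan: a finite collection of strictly convex polyhedral cones, closed
under taking faces, any two of whose members intersect in a common face. -/
def IsFan (F : Set (Set N)) : Prop :=
  F.Finite ∧ (∀ c ∈ F, IsConvexCone c ∧ IsStrictlyConvex c ∧ IsPolyhedralCone c) ∧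
    (∀ c ∈ F, ∀ d, IsFaceOf d c → d ∈ F) ∧
    ∀ c ∈ F, ∀ c' ∈ F, IsFaceOf (c ∩ c') c ∧ IsFaceOf (c ∩ c') c'

lemma zero_mem_coneGen (s : Set N) : (0:N) ∈ coneGen s :=
  ⟨∅, 0, by simp, fun _ => le_rfl, by simp⟩

lemma subset_coneGen (s : Set N) : s ⊆ coneGen s := fun x hx =>
  ⟨{x}, fun _ => 1, by simpa, fun _ => zero_le_one, by simp⟩

lemma rep_over [DecidableEq N] (f : Finset N) {x : N} (hx : x ∈ coneGen (↑f : Set N)) :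
    ∃ a : N → ℚ, (∀ y, 0 ≤ a y) ∧ x = ∑ y ∈ f, a y • y := by
  obtain ⟨g, t, hg, ht, rfl⟩ := hx
  have hgf : g ⊆ f := Finset.coe_subset.mp hg
  refine ⟨fun y => if y ∈ g then t y else 0,
    fun y => by by_cases h : y ∈ g <;> simp [h, ht y], ?_⟩
  calc ∑ y ∈ g, t y • y
      = ∑ y ∈ g, (if y ∈ g then t y else 0) • y :=
        Finset.sum_congr rfl (fun y hy => by simp [hy])
    _ = ∑ y ∈ f, (if y ∈ g then t y else 0) • y :=
        Finset.sum_subset hgf (fun y _ hy => by simp [hy])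

lemma coneGen_isConvexCone (s : Set N) : IsConvexCone (coneGen s) := by
  classical
  refine ⟨zero_mem_coneGen s, ?_, ?_⟩
  · rintro x ⟨f1, t1, hf1, ht1, rfl⟩ y ⟨f2, t2, hf2, ht2, rfl⟩
    refine ⟨f1 ∪ f2,
      fun z => (if z ∈ f1 then t1 z else 0) + (if z ∈ f2 then t2 z else 0), ?_, ?_, ?_⟩
    · rw [Finset.coe_union]; exact Set.union_subset hf1 hf2
    · intro y; dsimp only
      apply add_nonneg
      · by_cases h : y ∈ f1 <;> simp [h, ht1 y]
      · by_cases h : y ∈ f2 <;> simp [h, ht2 y]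
    · rw [Finset.sum_congr rfl (fun z _ => add_smul _ _ z), Finset.sum_add_distrib]
      congr 1
      · calc ∑ y ∈ f1, t1 y • y
            = ∑ y ∈ f1, (if y ∈ f1 then t1 y else 0) • y :=
              Finset.sum_congr rfl (fun y hy => by simp [hy])
          _ = ∑ y ∈ f1 ∪ f2, (if y ∈ f1 then t1 y else 0) • y :=
              Finset.sum_subset Finset.subset_union_left (fun y _ hy => by simp [hy])
      · calc ∑ y ∈ f2, t2 y • y
            = ∑ y ∈ f2, (if y ∈ f2 then t2 y else 0) • y :=
              Finset.sum_congr rfl (fun y hy => by simp [hy])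
          _ = ∑ y ∈ f1 ∪ f2, (if y ∈ f2 then t2 y else 0) • y :=
              Finset.sum_subset Finset.subset_union_right (fun y _ hy => by simp [hy])
  · rintro t ht x ⟨f1, t1, hf1, ht1, rfl⟩
    refine ⟨f1, fun z => t * t1 z, hf1, fun y => mul_nonneg ht (ht1 y), ?_⟩
    rw [Finset.smul_sum]
    exact Finset.sum_congr rfl fun y _ => smul_smul t (t1 y) y

lemma IsConvexCone.sum_mem {C : Set N} (hC : IsConvexCone C) {g : Finset N} {u : N → N}
    (hu : ∀ i ∈ g, u i ∈ C) : (∑ i ∈ g, u i) ∈ C := by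
  classical
  induction g using Finset.induction with
  | empty => simpa using hC.1
  | @insert a s h ih =>
    rw [Finset.sum_insert h]
    exact hC.2.1 _ (hu _ (Finset.mem_insert_self _ _))
      _ (ih fun i hi => hu i (Finset.mem_insert_of_mem hi))

lemma coneGen_min {s C : Set N} (hC : IsConvexCone C) (hs : s ⊆ C) : coneGen s ⊆ C := by
  rintro x ⟨f, t, hf, ht, rfl⟩
  exact hC.sum_mem fun y hy => hC.2.2 (t y) (ht y) y (hs (hf hy))

lemma coneGen_erase_eq [DecidableEq N] {f : Finset N} {w : N} (hw : w ∈ f)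
    (h : w ∈ coneGen (↑(f.erase w) : Set N)) :
    coneGen (↑f : Set N) = coneGen (↑(f.erase w) : Set N) := by
  apply le_antisymm
  · apply coneGen_min (coneGen_isConvexCone _)
    intro u hu
    rcases eq_or_ne u w with rfl | hne
    · exact h
    · exact subset_coneGen _ (by simpa [Finset.mem_erase, hne] using hu)
  · exact coneGen_min (coneGen_isConvexCone _)
      ((Finset.coe_subset.mpr (Finset.erase_subset _ _)).trans (subset_coneGen _))

lemma exists_irredundant [DecidableEq N] (f : Finset N) : ∃ f' : Finset N,
    coneGen (↑f' : Set N) = coneGen (↑f : Set N) ∧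
    ∀ w ∈ f', w ∉ coneGen (↑(f'.erase w) : Set N) := by
  induction f using Finset.strongInduction with
  | _ f ih =>
    by_cases h : ∀ w ∈ f, w ∉ coneGen (↑(f.erase w) : Set N)
    · exact ⟨f, rfl, h⟩
    · push_neg at h
      obtain ⟨w, hwf, hw⟩ := h
      obtain ⟨f', h2, h3⟩ := ih (f.erase w) (Finset.erase_ssubset hwf)
      exact ⟨f', h2.trans (coneGen_erase_eq hwf hw).symm, h3⟩

lemma ray_isConvexCone (w : N) : IsConvexCone {x : N | ∃ t : ℚ, 0 ≤ t ∧ x = t • w} := by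
  refine ⟨⟨0, le_rfl, by simp⟩, ?_, ?_⟩
  · rintro x ⟨t, ht, rfl⟩ y ⟨t', ht', rfl⟩
    exact ⟨t + t', add_nonneg ht ht', (add_smul t t' w).symm⟩
  · rintro s hs x ⟨t, ht, rfl⟩
    exact ⟨s * t, mul_nonneg hs ht, smul_smul s t w⟩

lemma ray_face [DecidableEq N] {f : Finset N} {w : N} (hw : w ∈ f)
    (hsc : IsStrictlyConvex (coneGen (↑f : Set N)))
    (hirr : w ∉ coneGen (↑(f.erase w) : Set N)) :
    IsFaceOf {x : N | ∃ t : ℚ, 0 ≤ t ∧ x = t • w} (coneGen (↑f : Set N)) := by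
  have hwc : w ∈ coneGen (↑f : Set N) := subset_coneGen _ (Finset.mem_coe.mpr hw)
  have hC := coneGen_isConvexCone (↑f : Set N)
  refine ⟨?_, ray_isConvexCone w, ?_⟩
  · rintro x ⟨t, ht, rfl⟩; exact hC.2.2 t ht w hwc
  · intro x hx y hy ⟨t, ht, hxy⟩
    obtain ⟨a, ha, rfl⟩ := rep_over f hx
    obtain ⟨b, hb, rfl⟩ := rep_over f hy
    have key : ∑ u ∈ f, (a u + b u) • u = t • w := by
      rw [← hxy, ← Finset.sum_add_distrib]
      exact Finset.sum_congr rfl fun u _ => add_smul _ _ u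
    have split : (a w + b w) • w + ∑ u ∈ f.erase w, (a u + b u) • u = t • w := by
      rw [Finset.add_sum_erase f (fun u => (a u + b u) • u) hw]; exact key
    have herase : ∑ u ∈ f.erase w, (a u + b u) • u = (t - (a w + b w)) • w := by
      rw [sub_smul]; linear_combination (norm := module) split
    by_cases hlt : a w + b w < t
    · exfalso
      apply hirr
      refine ⟨f.erase w, fun u => (t - (a w + b w))⁻¹ * (a u + b u), subset_rfl,
        fun u => mul_nonneg (inv_nonneg.mpr (by linarith)) (add_nonneg (ha u) (hb u)), ?_⟩
      have e2 : ∑ u ∈ f.erase w, ((t - (a w + b w))⁻¹ * (a u + b u)) • u = w := by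
        calc ∑ u ∈ f.erase w, ((t - (a w + b w))⁻¹ * (a u + b u)) • u
            = (t - (a w + b w))⁻¹ • ∑ u ∈ f.erase w, (a u + b u) • u := by
              rw [Finset.smul_sum]
              exact Finset.sum_congr rfl fun u _ => (smul_smul _ _ u).symm
          _ = w := by
              rw [herase, smul_smul,
                inv_mul_cancel₀ (by linarith : t - (a w + b w) ≠ 0), one_smul]
      exact e2.symm
    · push_neg at hlt
      set z := ∑ u ∈ f.erase w, (a u + b u) • u with hz
      have hzc : z ∈ coneGen (↑f : Set N) :=
        hC.sum_mem fun u hu => hC.2.2 _ (add_nonneg (ha u) (hb u)) u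
          (subset_coneGen _ (Finset.mem_coe.mpr (Finset.mem_of_mem_erase hu)))
      have hnegz : -z ∈ coneGen (↑f : Set N) := by
        have : -z = (a w + b w - t) • w := by
          rw [herase]; module
        rw [this]
        exact hC.2.2 _ (by linarith) w hwc
      have hz0 : z = 0 := hsc z hzc hnegz
      -- each term of z is zero
      have hterm : ∀ j ∈ f.erase w, (a j + b j) • j = 0 := by
        intro j hj
        have hsplit2 : (a j + b j) • j + ∑ u ∈ (f.erase w).erase j, (a u + b u) • u = z :=
          (Finset.add_sum_erase (f.erase w) (fun u => (a u + b u) • u) hj).trans hz.symm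
        have hrest : ∑ u ∈ (f.erase w).erase j, (a u + b u) • u ∈ coneGen (↑f : Set N) :=
          hC.sum_mem fun u hu => hC.2.2 _ (add_nonneg (ha u) (hb u)) u
            (subset_coneGen _ (Finset.mem_coe.mpr
              (Finset.mem_of_mem_erase (Finset.mem_of_mem_erase hu))))
        have hjc : (a j + b j) • j ∈ coneGen (↑f : Set N) :=
          hC.2.2 _ (add_nonneg (ha j) (hb j)) j
            (subset_coneGen _ (Finset.mem_coe.mpr (Finset.mem_of_mem_erase hj)))
        have hneg : -((a j + b j) • j) ∈ coneGen (↑f : Set N) := by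
          have : -((a j + b j) • j) = ∑ u ∈ (f.erase w).erase j, (a u + b u) • u := by
            rw [hz0] at hsplit2; linear_combination (norm := module) -hsplit2
          rw [this]; exact hrest
        exact hsc _ hjc hneg
      have hterma : ∀ j ∈ f.erase w, a j • j = 0 ∧ b j • j = 0 := by
        intro j hj
        rcases smul_eq_zero.mp (hterm j hj) with h | h
        · have ha0 : a j = 0 := by linarith [ha j, hb j]
          have hb0 : b j = 0 := by linarith [ha j, hb j]
          simp [ha0, hb0]
        · simp [h]
      constructor
      · refine ⟨a w, ha w, ?_⟩
        rw [← Finset.add_sum_erase f (fun u => a u • u) hw,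
          Finset.sum_eq_zero (fun j hj => (hterma j hj).1), add_zero]
      · refine ⟨b w, hb w, ?_⟩
        rw [← Finset.add_sum_erase f (fun u => b u • u) hw,
          Finset.sum_eq_zero (fun j hj => (hterma j hj).2), add_zero]

/-- Corollary 7.8(1): let `F` be a fan, `σ` a linear functional,
and `c_E ∈ F` a 1-dimensional cone (the ray of `v`) on which `σ` is negative,
while `σ` vanishes on every other 1-dimensional cone of `F`.  Then
`F^σ = {c ∩ σ^⊥ | c ∈ F}` is a fan and `F` is the join of `F^σ` and `c_E`:
every cone of `F` not in `F^σ` is generated by `c_E` and a cone of `F^σ`. -/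
theorem stmt_7 (F : Set (Set N)) (hF : IsFan F)
    (σ : Module.Dual ℚ N) (v : N) (hv : v ≠ 0)
    (cE : Set N) (hcE : cE ∈ F)
    (hcEray : cE = {x | ∃ t : ℚ, 0 ≤ t ∧ x = t • v})
    (hσv : σ v < 0)
    (hvanish : ∀ c ∈ F,
      (∃ w : N, w ≠ 0 ∧ c = {x | ∃ t : ℚ, 0 ≤ t ∧ x = t • w}) → c ≠ cE →
        ∀ x ∈ c, σ x = 0) :
    IsFan ((fun c => c ∩ {x | σ x = 0}) '' F) ∧
      ∀ c ∈ F, c ∉ (fun c => c ∩ {x | σ x = 0}) '' F →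
        ∃ d ∈ (fun c => c ∩ {x | σ x = 0}) '' F,
          c = {x | ∃ y ∈ d, ∃ t : ℚ, 0 ≤ t ∧ x = y + t • v} := by
  classical
  obtain ⟨hFfin, hFcones, hFface, hFint⟩ := hF
  -- structure lemma: every cone of F is generated by vectors that are either in ker σ
  -- or positive multiples of v
  have struct : ∀ c ∈ F, ∃ f' : Finset N, c = coneGen (↑f' : Set N) ∧
      ∀ w ∈ f', σ w = 0 ∨ ∃ s : ℚ, 0 < s ∧ w = s • v := by
    intro c hc
    obtain ⟨hconv, hsc, f, hf⟩ := hFcones c hc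
    obtain ⟨f', hgen, hirr⟩ := exists_irredundant f
    have hc' : c = coneGen (↑f' : Set N) := hf.trans hgen.symm
    refine ⟨f', hc', ?_⟩
    intro w hwf'
    have hscf' : IsStrictlyConvex (coneGen (↑f' : Set N)) := hc' ▸ hsc
    have hface := ray_face hwf' hscf' (hirr w hwf')
    rw [← hc'] at hface
    have hrayF : {x : N | ∃ t : ℚ, 0 ≤ t ∧ x = t • w} ∈ F := hFface c hc _ hface
    have hw0 : w ≠ 0 := fun h => hirr w hwf' (h ▸ zero_mem_coneGen _)
    have hwmem : w ∈ {x : N | ∃ t : ℚ, 0 ≤ t ∧ x = t • w} := ⟨1, zero_le_one, (one_smul _ _).symm⟩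
    by_cases hray : {x : N | ∃ t : ℚ, 0 ≤ t ∧ x = t • w} = cE
    · right
      have : w ∈ cE := hray ▸ hwmem
      rw [hcEray] at this
      obtain ⟨s, hs, rfl⟩ := this
      refine ⟨s, lt_of_le_of_ne hs ?_, rfl⟩
      rintro rfl
      exact hw0 (zero_smul _ _)
    · left
      exact hvanish _ hrayF ⟨w, hw0, rfl⟩ hray w hwmem
  have σnonpos : ∀ c ∈ F, ∀ x ∈ c, σ x ≤ 0 := by
    intro c hc x hx
    obtain ⟨f', hc', hgen⟩ := struct c hc
    rw [hc'] at hx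
    obtain ⟨a, ha, rfl⟩ := rep_over f' hx
    rw [map_sum]
    apply Finset.sum_nonpos
    intro u hu
    rcases hgen u hu with h | ⟨s, hs, rfl⟩
    · simp [map_smul, h]
    · rw [map_smul, map_smul, smul_eq_mul, smul_eq_mul]
      exact mul_nonpos_iff.mpr (Or.inl ⟨ha _, (mul_neg_of_pos_of_neg hs hσv).le⟩)
  have faceσ : ∀ c ∈ F, IsFaceOf (c ∩ {x | σ x = 0}) c := by
    intro c hc
    obtain ⟨hconv, -, -⟩ := hFcones c hc
    refine ⟨Set.inter_subset_left, ⟨⟨hconv.1, by simp⟩, ?_, ?_⟩, ?_⟩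
    · rintro x ⟨hx, hx0⟩ y ⟨hy, hy0⟩
      refine ⟨hconv.2.1 x hx y hy, ?_⟩
      rw [Set.mem_setOf_eq] at hx0 hy0 ⊢
      rw [map_add, hx0, hy0, add_zero]
    · rintro t ht x ⟨hx, hx0⟩
      refine ⟨hconv.2.2 t ht x hx, ?_⟩
      rw [Set.mem_setOf_eq] at hx0 ⊢
      rw [map_smul, hx0, smul_zero]
    · rintro x hx y hy ⟨-, h0⟩
      rw [Set.mem_setOf_eq, map_add] at h0
      have h1 := σnonpos c hc x hx
      have h2 := σnonpos c hc y hy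
      exact ⟨⟨hx, by rw [Set.mem_setOf_eq]; linarith⟩, ⟨hy, by rw [Set.mem_setOf_eq]; linarith⟩⟩
  have imgF : ∀ c ∈ F, c ∩ {x | σ x = 0} ∈ F := fun c hc => hFface c hc _ (faceσ c hc)
  constructor
  · refine ⟨hFfin.image _, ?_, ?_, ?_⟩
    · rintro _ ⟨c, hc, rfl⟩
      exact hFcones _ (imgF c hc)
    · rintro _ ⟨c, hc, rfl⟩ d hd
      have hdF : d ∈ F := hFface _ (imgF c hc) d hd
      have hdσ : d ⊆ {x | σ x = 0} := hd.1.trans Set.inter_subset_right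
      exact ⟨d, hdF, Set.inter_eq_left.mpr hdσ⟩
    · rintro _ ⟨c, hc, rfl⟩ _ ⟨c', hc', rfl⟩
      exact hFint _ (imgF c hc) _ (imgF c' hc')
  · intro c hc hcnot
    refine ⟨c ∩ {x | σ x = 0}, ⟨c, hc, rfl⟩, ?_⟩
    obtain ⟨f', hc', hgen⟩ := struct c hc
    have hconv := (hFcones c hc).1
    have hvc : v ∈ c := by
      by_cases hall : ∀ w ∈ f', σ w = 0
      · exfalso
        apply hcnot
        refine ⟨c, hc, Set.inter_eq_left.mpr ?_⟩
        intro x hx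
        rw [hc'] at hx
        obtain ⟨a, ha, rfl⟩ := rep_over f' hx
        rw [Set.mem_setOf_eq, map_sum]
        exact Finset.sum_eq_zero fun u hu => by rw [map_smul, hall u hu, smul_zero]
      · push_neg at hall
        obtain ⟨w, hw, hwσ⟩ := hall
        rcases hgen w hw with h | ⟨s, hs, rfl⟩
        · exact absurd h hwσ
        · have hmem : s • v ∈ c := hc' ▸ subset_coneGen _ (Finset.mem_coe.mpr hw)
          have := hconv.2.2 s⁻¹ (by positivity) _ hmem
          rwa [smul_smul, inv_mul_cancel₀ hs.ne', one_smul] at this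
    ext x
    constructor
    · intro hx
      rw [hc'] at hx
      obtain ⟨a, ha, rfl⟩ := rep_over f' hx
      set g0 := f'.filter (fun u => σ u = 0) with hg0
      set g1 := f'.filter (fun u => ¬ σ u = 0) with hg1
      refine ⟨∑ u ∈ g0, a u • u, ⟨?_, ?_⟩, ∑ u ∈ g1, a u * (σ u / σ v), ?_, ?_⟩
      · rw [hc']
        refine ⟨g0, a, ?_, ha, rfl⟩
        exact Finset.coe_subset.mpr (Finset.filter_subset _ _)
      · rw [Set.mem_setOf_eq, map_sum]
        refine Finset.sum_eq_zero fun u hu => ?_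
        rw [map_smul, (Finset.mem_filter.mp hu).2, smul_zero]
      · refine Finset.sum_nonneg fun u hu => ?_
        obtain ⟨huf, huσ⟩ := Finset.mem_filter.mp hu
        rcases hgen u huf with h | ⟨s, hs, rfl⟩
        · exact absurd h huσ
        · have hσu : σ (s • v) = s * σ v := by rw [map_smul, smul_eq_mul]
          rw [hσu, mul_div_cancel_right₀ _ (ne_of_lt hσv)]
          exact mul_nonneg (ha _) hs.le
      · have hsum1 : ∑ u ∈ g1, a u • u = (∑ u ∈ g1, a u * (σ u / σ v)) • v := by
          rw [Finset.sum_smul]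
          refine Finset.sum_congr rfl fun u hu => ?_
          obtain ⟨huf, huσ⟩ := Finset.mem_filter.mp hu
          rcases hgen u huf with h | ⟨s, hs, rfl⟩
          · exact absurd h huσ
          · have hσu : σ (s • v) = s * σ v := by rw [map_smul, smul_eq_mul]
            rw [hσu, mul_div_cancel_right₀ _ (ne_of_lt hσv), mul_smul, smul_smul]
        rw [← hsum1, hg0, hg1, Finset.sum_filter_add_sum_filter_not]
    · rintro ⟨y, ⟨hyc, -⟩, t, ht, rfl⟩
      exact hconv.2.1 y hyc _ (hconv.2.2 t ht v hvc)
end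

section
/- Let X be a smooth complete toric variety under a torus G, D a set of boundary divisors, and A the Levi subgroup of Aut°(X, D) with root system Φ(X, D). Then X as a spherical A-variety is horospherical, i.e. its set of spherical roots Σ_A(X) is empty; equivalently, its valuation cone V_A(X) is all of N_A(X). -/
/-!
The fan is complete, so the support of the colored fan `{c ∩ Ψ^⊥ | c ∈ F}` is the whole subspace
`Ψ^⊥`, which `res` maps onto `N_A(X)`. Hence the valuation cone is all of `N_A(X)`. A spherical
root `σ` would then satisfy both `⟨w, σ⟩ ≤ 0` and `⟨-w, σ⟩ ≤ 0` for every `w`, forcing `σ = 0`.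
-/

theorem Set.biUnion_inter_eq_of_biUnion_eq_univ {α ι : Type*} {F : Set ι} {c : ι → Set α}
    (hF : ⋃ i ∈ F, c i = Set.univ) (s : Set α) : ⋃ i ∈ F, (c i ∩ s) = s := by
  rw [← Set.iUnion₂_inter, hF, Set.univ_inter]

theorem Submodule.coe_biInf_ker_eq_setOf {R M S : Type*} [CommSemiring R] [AddCommMonoid M]
    [Module R M] [Membership (Module.Dual R M) S] (Ψ : S) :
    ((⨅ α ∈ Ψ, LinearMap.ker α : Submodule R M) : Set M) = {x | ∀ α ∈ Ψ, α x = 0} := by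
  ext x
  simp

theorem LinearMap.image_eq_univ_of_surjective_comp_subtype {R M M₂ : Type*} [Semiring R]
    [AddCommMonoid M] [AddCommMonoid M₂] [Module R M] [Module R M₂] (f : M →ₗ[R] M₂)
    (p : Submodule R M) (hf : Function.Surjective (f.comp p.subtype)) :
    f '' (p : Set M) = Set.univ := by
  rw [← Subtype.range_coe (s := (p : Set M)), ← Set.range_comp]
  exact hf.range_eq

theorem Module.eq_zero_of_forall_dual_apply_nonpos {R V : Type*} [CommRing R] [PartialOrder R]
    [IsOrderedAddMonoid R] [AddCommGroup V] [Module R V] [Module.Projective R V] {v : V}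
    (hv : ∀ w : Module.Dual R V, w v ≤ 0) : v = 0 := by
  refine (Module.forall_dual_apply_eq_zero_iff R v).mp fun w => le_antisymm (hv w) ?_
  simpa using hv (-w)

theorem Finset.eq_empty_of_forall_dual_nonpos {R V : Type*} [CommRing R] [PartialOrder R]
    [IsOrderedAddMonoid R] [AddCommGroup V] [Module R V] [Module.Projective R V] {S : Finset V}
    (hS0 : (0 : V) ∉ S) (hS : ∀ w : Module.Dual R V, ∀ s ∈ S, w s ≤ 0) : S = ∅ :=
  Finset.eq_empty_of_forall_notMem fun s hs =>
    hS0 (Module.eq_zero_of_forall_dual_apply_nonpos (fun w => hS w s hs) ▸ hs)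

theorem stmt_15_general {N : Type*} [AddCommGroup N] [Module ℚ N]
    (F : Set (Set N))
    (hcomplete : ⋃ c ∈ F, c = Set.univ)
    (Ψ : Finset (Module.Dual ℚ N))
    (ΛA : Submodule ℚ (Module.Dual ℚ N))
    (res : N →ₗ[ℚ] Module.Dual ℚ ↥ΛA)
    (hbij : Function.Bijective
      ⇑(res.comp (⨅ α ∈ Ψ, LinearMap.ker (α : N →ₗ[ℚ] ℚ)).subtype))
    (SigA : Finset ↥ΛA) (hSig0 : (0 : ↥ΛA) ∉ SigA)
    (VA : Set (Module.Dual ℚ ↥ΛA))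
    (hVA : VA = {w | ∀ s ∈ SigA, w s ≤ 0})
    (hsupp : VA = res '' (⋃ c ∈ F, (c ∩ {x | ∀ α ∈ Ψ, α x = 0}))) :
    SigA = ∅ ∧ VA = Set.univ := by
  have hVA_univ : VA = Set.univ := by
    rw [hsupp, Set.biUnion_inter_eq_of_biUnion_eq_univ hcomplete,
      ← Submodule.coe_biInf_ker_eq_setOf Ψ,
      res.image_eq_univ_of_surjective_comp_subtype _ hbij.2]
  refine ⟨Finset.eq_empty_of_forall_dual_nonpos (R := ℚ) hSig0 fun w => ?_, hVA_univ⟩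
  have hw : w ∈ VA := hVA_univ ▸ Set.mem_univ w
  rwa [hVA] at hw

/-- Corollary 8.10: Let `X` be a smooth complete toric variety
under a torus `G`, `D` a set of boundary divisors, `A` the Levi subgroup of
`Aut°(X, D)` with simple roots `Ψ`.  Abstract data: `F` is the (complete) fan
of `X` in `N`; `ΛA = Λ_A(X)` with restriction map
`res : N → N_A(X) = Hom(Λ_A(X), ℚ)`, which restricts to an isomorphism
`Ψ^⊥ ≅ N_A(X)` (Proposition 8.6(d), hypothesis `hbij`); by Theorem 8.7 the
valuation cone `V_A(X)` equals the image under `res` of the support of the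
colored fan `{c ∩ Ψ^⊥ | c ∈ F}` (hypothesis `hsupp`); `Σ_A(X)` is the set of
spherical roots, so `V_A(X) = {w | ⟨w, σ⟩ ≤ 0 ∀ σ ∈ Σ_A(X)}` and `0 ∉ Σ_A(X)`.
Then `X` is horospherical as an `A`-variety: `Σ_A(X) = ∅`, equivalently
`V_A(X)` is all of `N_A(X)`. -/
theorem stmt_15 {N : Type*} [AddCommGroup N] [Module ℚ N]
    [FiniteDimensional ℚ N]
    (F : Set (Set N))
    (hconv : ∀ c ∈ F, (0 : N) ∈ c ∧ (∀ x ∈ c, ∀ y ∈ c, x + y ∈ c) ∧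
      ∀ t : ℚ, 0 ≤ t → ∀ x ∈ c, t • x ∈ c)
    (hcomplete : ⋃ c ∈ F, c = Set.univ)
    (Ψ : Finset (Module.Dual ℚ N))
    (ΛA : Submodule ℚ (Module.Dual ℚ N))
    (res : N →ₗ[ℚ] Module.Dual ℚ ↥ΛA)
    (hres : res = (ΛA.subtype.dualMap).comp (Module.Dual.eval ℚ N))
    (hbij : Function.Bijective
      ⇑(res.comp (⨅ α ∈ Ψ, LinearMap.ker (α : N →ₗ[ℚ] ℚ)).subtype))
    (SigA : Finset ↥ΛA) (hSig0 : (0 : ↥ΛA) ∉ SigA)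
    (VA : Set (Module.Dual ℚ ↥ΛA))
    (hVA : VA = {w | ∀ s ∈ SigA, w s ≤ 0})
    (hsupp : VA = res '' (⋃ c ∈ F, (c ∩ {x | ∀ α ∈ Ψ, α x = 0}))) :
    SigA = ∅ ∧ VA = Set.univ :=
  stmt_15_general F hcomplete Ψ ΛA res hbij SigA hSig0 VA hVA hsupp
end
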